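/- Let f : ℝ → ℝ be four times continuously differentiable on an open interval containing α with f(α) = 0 and f'(α) ≠ 0. Define y(x) = x - f(x)/f'(x) and the Midpoint-Trapezoidal Newton iterate S(x) = x - 4 f(x) / (f'(x) + 2 f'((x + y(x))/2) + f'(y(x))). Then there exist a neighborhood U of α and C > 0 such that for all x ∈ U where the iterate is defined, |S(x) - α| ≤ C·|x - α|³. -/

import Mathlib

/-!
Write `e = x - α`, `y` for the Newton predictor and `D` for the quadrature denominator
`f'(x) + 2 f'((x + y)/2) + f'(y)`. Newton's method is quadratic, `y - α = O(e²)`, so Taylor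
expansion gives `f'(y) = f'(α) + O(e²)` and `f'((x + y)/2) = f'(α) + f''(α) e/2 + O(e²)`, whence
`D = 4 f'(α) + 2 f''(α) e + O(e²)`. Together with `f(x) = f'(α) e + f''(α) e²/2 + O(e³)` the
quadratic terms cancel in `e D - 4 f(x) = O(e³)`, and `S(x) - α = (e D - 4 f(x)) / D` with
`D → 4 f'(α) ≠ 0`.
-/

open Asymptotics Filter Topology

section TaylorBigO

variable {E : Type*} [NormedAddCommGroup E] {x₀ : ℝ}

theorem tendsto_of_isBigO_sub_pow {u : ℝ → ℝ} {j : ℕ} (hj : j ≠ 0)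
    (hu : (fun x => u x - x₀) =O[𝓝 x₀] fun x => (x - x₀) ^ j) :
    Tendsto u (𝓝 x₀) (𝓝 x₀) := by
  have hpow : Tendsto (fun x : ℝ => (x - x₀) ^ j) (𝓝 x₀) (𝓝 0) :=
    ((continuous_sub_right x₀).pow j).tendsto' x₀ 0 (by simp [hj])
  exact tendsto_sub_nhds_zero_iff.1 (hu.trans_tendsto hpow)

theorem Asymptotics.IsBigO.comp_of_isBigO_sub_pow {g : ℝ → E} {u : ℝ → ℝ} {j k : ℕ} (hj : j ≠ 0)
    (hg : g =O[𝓝 x₀] fun x => (x - x₀) ^ k)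
    (hu : (fun x => u x - x₀) =O[𝓝 x₀] fun x => (x - x₀) ^ j) :
    (fun x => g (u x)) =O[𝓝 x₀] fun x => (x - x₀) ^ (j * k) := by
  simpa only [Function.comp_def, ← pow_mul] using
    (hg.comp_tendsto (tendsto_of_isBigO_sub_pow hj hu)).trans (hu.pow k)

theorem Asymptotics.IsBigO.sub_mul_pow_succ {g : ℝ → ℝ} {k : ℕ}
    (hg : g =O[𝓝 x₀] fun x => (x - x₀) ^ k) :
    (fun x => (x - x₀) * g x) =O[𝓝 x₀] fun x => (x - x₀) ^ (k + 1) := by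
  simpa only [← pow_succ'] using (isBigO_refl (fun x => x - x₀) _).mul hg

variable [NormedSpace ℝ E]

theorem isBigO_sub_pow_succ_of_hasDerivAt {g g' : ℝ → E} {n : ℕ}
    (hg : ∀ᶠ x in 𝓝 x₀, HasDerivAt g (g' x) x) (hg' : g' =O[𝓝 x₀] fun x => (x - x₀) ^ n) :
    (fun x => g x - g x₀) =O[𝓝 x₀] fun x => (x - x₀) ^ (n + 1) := by
  obtain ⟨c, hc₀, hc⟩ := hg'.exists_pos
  obtain ⟨r, hr, hball⟩ := Metric.eventually_nhds_iff_ball.1 (hg.and hc.bound)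
  refine IsBigO.of_bound c (Metric.eventually_nhds_iff_ball.2 ⟨r, hr, fun x hx => ?_⟩)
  have hseg : segment ℝ x₀ x ⊆ Metric.ball x₀ r :=
    (convex_ball x₀ r).segment_subset (Metric.mem_ball_self hr) hx
  have hbound : ∀ t ∈ segment ℝ x₀ x, ‖g' t‖ ≤ c * |x - x₀| ^ n := fun t ht => by
    have hdist : |t - x₀| ≤ |x - x₀| := by
      rw [segment_eq_uIcc] at ht
      exact Set.abs_sub_left_of_mem_uIcc ht
    calc ‖g' t‖ ≤ c * |t - x₀| ^ n := by simpa using (hball t (hseg ht)).2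
      _ ≤ c * |x - x₀| ^ n := by gcongr
  have := (convex_segment x₀ x).norm_image_sub_le_of_norm_hasDerivWithin_le
    (fun t ht => (hball t (hseg ht)).1.hasDerivWithinAt) hbound
    (left_mem_segment ℝ x₀ x) (right_mem_segment ℝ x₀ x)
  simpa [pow_succ, mul_assoc] using this

theorem ContDiffAt.isBigO_linear_remainder {g : ℝ → E} (hg : ContDiffAt ℝ 2 g x₀) :
    (fun x => g x - g x₀ - (x - x₀) • deriv g x₀) =O[𝓝 x₀] fun x => (x - x₀) ^ 2 := by
  have hderiv : ∀ᶠ x in 𝓝 x₀,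
      HasDerivAt (fun x => g x - (x - x₀) • deriv g x₀) (deriv g x - deriv g x₀) x := by
    filter_upwards [hg.eventually (by simp)] with x hx
    simpa using (hx.differentiableAt (by norm_num)).hasDerivAt.fun_sub
      (((hasDerivAt_id x).sub_const x₀).smul_const (deriv g x₀))
  have hg' : HasDerivAt (deriv g) (deriv (deriv g) x₀) x₀ :=
    ((hg.derivWithin (m := 1) (by norm_num)).differentiableAt one_ne_zero).hasDerivAt
  simpa [sub_right_comm] using
    isBigO_sub_pow_succ_of_hasDerivAt hderiv (by simpa using hg'.isBigO_sub)

theorem ContDiffAt.isBigO_quadratic_remainder {g : ℝ → E} (hg : ContDiffAt ℝ 3 g x₀) :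
    (fun x => g x - g x₀ - (x - x₀) • deriv g x₀ - ((x - x₀) ^ 2 / 2) • deriv (deriv g) x₀)
      =O[𝓝 x₀] fun x => (x - x₀) ^ 3 := by
  have hderiv : ∀ᶠ x in 𝓝 x₀, HasDerivAt
      (fun x => g x - (x - x₀) • deriv g x₀ - ((x - x₀) ^ 2 / 2) • deriv (deriv g) x₀)
      (deriv g x - deriv g x₀ - (x - x₀) • deriv (deriv g) x₀) x := by
    filter_upwards [hg.eventually (by simp)] with x hx
    have hsq : HasDerivAt (fun x => (x - x₀) ^ 2 / 2) (x - x₀) x := by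
      simpa using (((hasDerivAt_id x).sub_const x₀).pow 2).div_const 2
    simpa [sub_sub] using ((hx.differentiableAt (by norm_num)).hasDerivAt.fun_sub
      (((hasDerivAt_id x).sub_const x₀).smul_const (deriv g x₀))).fun_sub
      (hsq.smul_const (deriv (deriv g) x₀))
  simpa [sub_right_comm] using isBigO_sub_pow_succ_of_hasDerivAt hderiv
    (hg.derivWithin (m := 2) (by norm_num)).isBigO_linear_remainder

end TaylorBigO

noncomputable def newtonStep (f : ℝ → ℝ) (x : ℝ) : ℝ :=
  x - f x / deriv f x

noncomputable def mtnDenominator (f : ℝ → ℝ) (x : ℝ) : ℝ :=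
  deriv f x + 2 * deriv f ((x + newtonStep f x) / 2) + deriv f (newtonStep f x)

/- Solving `0 = f α ≈ f x + (α - x) * mtnDenominator f x / 4` for `α`: the factor is the mean of
the midpoint and trapezoidal rules for `f'` on `[x, α]`, with `α` replaced by `newtonStep f x`. -/
noncomputable def mtnStep (f : ℝ → ℝ) (x : ℝ) : ℝ :=
  x - 4 * f x / mtnDenominator f x

section Convergence

variable {f : ℝ → ℝ} {α : ℝ}

theorem isBigO_newtonStep_sub (hf : ContDiffAt ℝ 2 f α) (hroot : f α = 0)
    (hder : deriv f α ≠ 0) :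
    (fun x => newtonStep f x - α) =O[𝓝 α] fun x => (x - α) ^ 2 := by
  have hf' : HasDerivAt (deriv f) (deriv (deriv f) α) α :=
    ((hf.derivWithin (m := 1) (by norm_num)).differentiableAt one_ne_zero).hasDerivAt
  have hinv : (fun x => (deriv f x)⁻¹) =O[𝓝 α] fun _ => (1 : ℝ) :=
    (hf'.continuousAt.tendsto.inv₀ hder).isBigO_one ℝ
  have hnum : (fun x => (x - α) * (deriv f x - deriv f α) - (f x - f α - (x - α) • deriv f α))
      =O[𝓝 α] fun x => (x - α) ^ 2 :=
    (IsBigO.sub_mul_pow_succ (k := 1) (by simpa using hf'.isBigO_sub)).sub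
      hf.isBigO_linear_remainder
  refine (hnum.mul hinv).congr' ?_ (by simp)
  filter_upwards [hf'.continuousAt.eventually_ne hder] with x hx
  simp only [newtonStep, hroot, smul_eq_mul]
  field_simp
  ring

theorem tendsto_deriv_comp_newtonStep (hf : ContDiffAt ℝ 2 f α) (hroot : f α = 0)
    (hder : deriv f α ≠ 0) :
    Tendsto (fun x => deriv f (newtonStep f x)) (𝓝 α) (𝓝 (deriv f α)) :=
  (hf.derivWithin (m := 1) (by norm_num)).continuousAt.tendsto.comp
    (tendsto_of_isBigO_sub_pow two_ne_zero (isBigO_newtonStep_sub hf hroot hder))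

theorem isBigO_midpoint_newtonStep_sub (hf : ContDiffAt ℝ 2 f α) (hroot : f α = 0)
    (hder : deriv f α ≠ 0) :
    (fun x => (x + newtonStep f x) / 2 - α) =O[𝓝 α] fun x => x - α := by
  have hsq : (fun x => (x - α) ^ 2) =O[𝓝 α] fun x => x - α := by
    simpa only [Function.comp_def, pow_one] using
      ((isLittleO_pow_pow (𝕜 := ℝ) one_lt_two).comp_tendsto
        ((continuous_sub_right α).tendsto' α 0 (sub_self α))).isBigO
  have := ((isBigO_refl (fun x => x - α) _).add
    ((isBigO_newtonStep_sub hf hroot hder).trans hsq)).const_mul_left (1 / 2 : ℝ)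
  refine this.congr_left fun x => ?_
  ring

theorem isBigO_mtnDenominator_sub (hf : ContDiffAt ℝ 3 f α) (hroot : f α = 0)
    (hder : deriv f α ≠ 0) :
    (fun x => mtnDenominator f x - 4 * deriv f α - 2 * deriv (deriv f) α * (x - α))
      =O[𝓝 α] fun x => (x - α) ^ 2 := by
  have hf2 : ContDiffAt ℝ 2 f α := hf.of_le (by norm_num)
  have hf' : ContDiffAt ℝ 2 (deriv f) α := hf.derivWithin (by norm_num)
  have hmid := (hf'.isBigO_linear_remainder.comp_of_isBigO_sub_pow one_ne_zero
    (by simpa using isBigO_midpoint_newtonStep_sub hf2 hroot hder)).add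
    ((isBigO_newtonStep_sub hf2 hroot hder).const_mul_left (deriv (deriv f) α / 2))
  have hnewton := IsBigO.comp_of_isBigO_sub_pow (k := 1) two_ne_zero
    (by simpa using (hf'.differentiableAt (by norm_num)).hasDerivAt.isBigO_sub)
    (isBigO_newtonStep_sub hf2 hroot hder)
  refine ((hf'.isBigO_linear_remainder.add (hmid.const_mul_left 2)).add
    (by simpa using hnewton)).congr_left fun x => ?_
  simp only [mtnDenominator, smul_eq_mul]
  ring

theorem tendsto_mtnDenominator (hf : ContDiffAt ℝ 2 f α) (hroot : f α = 0)
    (hder : deriv f α ≠ 0) :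
    Tendsto (mtnDenominator f) (𝓝 α) (𝓝 (4 * deriv f α)) := by
  have hcont := (hf.derivWithin (m := 1) (by norm_num)).continuousAt
  have hmid : Tendsto (fun x => deriv f ((x + newtonStep f x) / 2)) (𝓝 α) (𝓝 (deriv f α)) :=
    hcont.tendsto.comp (tendsto_of_isBigO_sub_pow one_ne_zero
      (by simpa using isBigO_midpoint_newtonStep_sub hf hroot hder))
  have := (hcont.tendsto.add (hmid.const_mul 2)).add (tendsto_deriv_comp_newtonStep hf hroot hder)
  rwa [show deriv f α + 2 * deriv f α + deriv f α = 4 * deriv f α by ring] at this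

theorem isBigO_mtnStep_sub (hf : ContDiffAt ℝ 3 f α) (hroot : f α = 0) (hder : deriv f α ≠ 0) :
    (fun x => mtnStep f x - α) =O[𝓝 α] fun x => (x - α) ^ 3 := by
  have hf2 : ContDiffAt ℝ 2 f α := hf.of_le (by norm_num)
  have hD := tendsto_mtnDenominator hf2 hroot hder
  have hD₀ : 4 * deriv f α ≠ 0 := mul_ne_zero four_ne_zero hder
  have hnum : (fun x => (x - α) * mtnDenominator f x - 4 * f x) =O[𝓝 α] fun x => (x - α) ^ 3 := by
    refine ((isBigO_mtnDenominator_sub hf hroot hder).sub_mul_pow_succ.sub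
      (hf.isBigO_quadratic_remainder.const_mul_left 4)).congr (fun x => ?_) (fun x => ?_)
    · simp only [hroot, smul_eq_mul]
      ring
    · ring
  refine (hnum.mul ((hD.inv₀ hD₀).isBigO_one ℝ)).congr' ?_ (by simp)
  filter_upwards [hD.eventually_ne hD₀] with x hx
  simp only [mtnStep]
  field_simp
  ring

end Convergence

theorem midpoint_trapezoidal_newton_cubic_convergence
    (f : ℝ → ℝ) (α : ℝ) (s : Set ℝ) (hs : IsOpen s) (hαs : α ∈ s)
    (hf : ContDiffOn ℝ 4 f s) (hroot : f α = 0) (hder : deriv f α ≠ 0) :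
    ∃ U ∈ nhds α, ∃ C > (0:ℝ), ∀ x ∈ U,
      deriv f x ≠ 0 →
      deriv f x + 2 * deriv f ((x + (x - f x / deriv f x)) / 2)
        + deriv f (x - f x / deriv f x) ≠ 0 →
      |(x - 4 * f x / (deriv f x + 2 * deriv f ((x + (x - f x / deriv f x)) / 2)
        + deriv f (x - f x / deriv f x))) - α| ≤ C * |x - α| ^ 3 := by
  have hf3 : ContDiffAt ℝ 3 f α := (hf.contDiffAt (hs.mem_nhds hαs)).of_le (by norm_num)
  obtain ⟨C, hC₀, hC⟩ := (isBigO_mtnStep_sub hf3 hroot hder).exists_pos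
  refine ⟨_, hC.bound, C, hC₀, fun x hx _ _ => ?_⟩
  simpa [mtnStep, mtnDenominator, newtonStep] using hx
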